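/- Let a, b, c, d, e be real numbers with b ≠ 0, let γ > -1/2, and let h ∈ L¹_γ(ℝ₊). Then the map t ↦ B^{a,b,c}_{d,e,γ}[h](t) is continuous on [0,∞). -/

import Mathlib

open MeasureTheory Set Complex ENNReal

noncomputable section

/-- Normalized Bessel function `j_γ`. -/
def normBesselJ (γ : ℝ) (x : ℝ) : ℝ :=
  Real.Gamma (γ + 1) *
    ∑' n : ℕ, (-1 : ℝ) ^ n * (x / 2) ^ (2 * n) / ((n.factorial : ℝ) * Real.Gamma ((n : ℝ) + γ + 1))

/-- The constant `c_γ = 1/(2^γ Γ(γ+1))`. -/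
def cGamma (γ : ℝ) : ℝ := 1 / ((2 : ℝ) ^ γ * Real.Gamma (γ + 1))

/-- The quadratic-phase Fourier–Bessel kernel `J^{a,b,c}_{d,e,γ}(t,s)`. -/
def qpKernel (a b c d e γ : ℝ) (t s : ℝ) : ℂ :=
  Complex.exp (-Complex.I * ((a * s ^ 2 + c * t ^ 2 + d * s + e * t : ℝ) : ℂ)) *
    ((normBesselJ γ (s * t / b) : ℝ) : ℂ)

/-- The quadratic-phase Fourier–Bessel transform `B^{a,b,c}_{d,e,γ}[h]`. -/
def qpFB (a b c d e γ : ℝ) (h : ℝ → ℂ) (t : ℝ) : ℂ :=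
  ((cGamma γ : ℝ) : ℂ) / (Complex.I * (b : ℂ)) ^ ((γ : ℂ) + 1) *
    ∫ s in Ioi (0 : ℝ), qpKernel a b c d e γ t s * h s * ((s ^ (2 * γ + 1) : ℝ) : ℂ)

/-- The weighted measure `s^{2γ+1} ds` on `(0,∞)`; `L^p_γ(ℝ₊) = ℒ^p(muGamma γ)`
and `‖·‖_{γ,p} = eLpNorm · p (muGamma γ)`. -/
def muGamma (γ : ℝ) : Measure ℝ :=
  (volume.restrict (Ioi (0 : ℝ))).withDensity fun s => ENNReal.ofReal (s ^ (2 * γ + 1))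

/-- The Fourier–Bessel (Hankel-type) transform `𝓑_γ[h]`. -/
def fourierBessel (γ : ℝ) (h : ℝ → ℂ) (t : ℝ) : ℂ :=
  ((cGamma γ : ℝ) : ℂ) *
    ∫ s in Ioi (0 : ℝ), ((normBesselJ γ (s * t) : ℝ) : ℂ) * h s * ((s ^ (2 * γ + 1) : ℝ) : ℂ)

/-- Area of a triangle with side lengths `s, t, u`. -/
def triArea (s t u : ℝ) : ℝ :=
  1 / 4 * Real.sqrt ((s + t + u) * (s + t - u) * (s - t + u) * (t + u - s))

/-- The kernel `W_γ(s,t,u)` of the Fourier–Bessel translation. -/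
def Wker (γ : ℝ) (s t u : ℝ) : ℝ :=
  if |s - t| ≤ u ∧ u ≤ s + t then
    (2 : ℝ) ^ (2 * γ - 1) * Real.Gamma (γ + 1) / (Real.sqrt Real.pi * Real.Gamma (γ + 1 / 2)) *
      triArea s t u ^ (2 * γ - 1) / (s * t * u) ^ (2 * γ)
  else 0

/-- The quadratic-phase kernel `W^{a,b,d}_γ(s,t,u)`. -/
def Wabd (a b d γ : ℝ) (s t u : ℝ) : ℂ :=
  ((Wker γ s t u : ℝ) : ℂ) *
    Complex.exp (-Complex.I * ((a * (s ^ 2 + t ^ 2 + u ^ 2) + d * (s + t + u) : ℝ) : ℂ))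

/-- The quadratic-phase Fourier–Bessel translation operator `T^{a,b,d}_{t,γ}[h](s)`. -/
def qpTranslate (a b d γ : ℝ) (t : ℝ) (h : ℝ → ℂ) (s : ℝ) : ℂ :=
  ∫ u in Ioi (0 : ℝ),
    h u * Wabd a b d γ s t u * Complex.exp (Complex.I * ((a * u ^ 2 + d * u : ℝ) : ℂ)) *
      ((u ^ (2 * γ + 1) : ℝ) : ℂ)

/-- The quadratic-phase Fourier–Bessel convolution `h ⋆ g`. -/
def qpConv (a b d γ : ℝ) (h g : ℝ → ℂ) (t : ℝ) : ℂ :=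
  ∫ s in Ioi (0 : ℝ),
    qpTranslate a b d γ t h s * g s * Complex.exp (Complex.I * ((a * s ^ 2 + d * s : ℝ) : ℂ)) *
      ((s ^ (2 * γ + 1) : ℝ) : ℂ)

end

/-!
Poisson's integral `j_γ(x) = K ∫₀¹ cos (x √u) u^(-1/2) (1 - u)^(γ - 1/2) du` is obtained by
integrating the cosine series term by term against Beta integrals. It shows that `j_γ` is
continuous and bounded by `j_γ(0) = 1`, so the quadratic-phase kernel is continuous and has
modulus at most `1`, and the transform of an `L¹_γ` function is continuous by dominated
convergence.
-/

open scoped Nat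

lemma ofReal_cpow_mul_one_sub_cpow {u v x : ℝ} (hx : x ∈ Icc (0 : ℝ) 1) :
    (x : ℂ) ^ ((u : ℂ) - 1) * (1 - (x : ℂ)) ^ ((v : ℂ) - 1)
      = ((x ^ (u - 1) * (1 - x) ^ (v - 1) : ℝ) : ℂ) := by
  rw [Complex.ofReal_mul, Complex.ofReal_cpow hx.1, Complex.ofReal_cpow (sub_nonneg.2 hx.2)]
  push_cast
  rfl

lemma integrableOn_rpow_mul_one_sub_rpow {u v : ℝ} (hu : 0 < u) (hv : 0 < v) :
    IntegrableOn (fun x : ℝ => x ^ (u - 1) * (1 - x) ^ (v - 1)) (Ioo 0 1) := by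
  have h := Complex.betaIntegral_convergent (u := u) (v := v) (by simpa) (by simpa)
  rw [intervalIntegrable_iff_integrableOn_Ioo_of_le zero_le_one] at h
  have h' := h.congr_fun (fun x hx => ofReal_cpow_mul_one_sub_cpow ⟨hx.1.le, hx.2.le⟩)
    measurableSet_Ioo
  simpa [IntegrableOn] using h'.re

lemma integral_rpow_mul_one_sub_rpow {u v : ℝ} (hu : 0 < u) (hv : 0 < v) :
    ∫ x in Ioo (0 : ℝ) 1, x ^ (u - 1) * (1 - x) ^ (v - 1)
      = Real.Gamma u * Real.Gamma v / Real.Gamma (u + v) := by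
  have hbeta : Complex.betaIntegral u v
      = ((∫ x in Ioo (0 : ℝ) 1, x ^ (u - 1) * (1 - x) ^ (v - 1) : ℝ) : ℂ) := by
    rw [Complex.betaIntegral, intervalIntegral.integral_of_le zero_le_one,
      integral_Ioc_eq_integral_Ioo, ← integral_complex_ofReal]
    exact setIntegral_congr_fun measurableSet_Ioo
      fun x hx => ofReal_cpow_mul_one_sub_cpow ⟨hx.1.le, hx.2.le⟩
  have h := Complex.betaIntegral_eq_Gamma_mul_div (u := u) (v := v) (by simpa) (by simpa)
  rw [hbeta, ← Complex.ofReal_add] at h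
  simp only [Complex.Gamma_ofReal] at h
  exact_mod_cast h

lemma Real.Gamma_nat_add_half_eq_factorial (n : ℕ) :
    Real.Gamma (n + 1 / 2) = (2 * n)! * Real.sqrt Real.pi / (4 ^ n * n !) := by
  have hfac : ((2 * n)! : ℝ) = (2 * n - 1 : ℕ)‼ * (2 ^ n * n !) := by
    rcases n with _ | k
    · simp
    · rw [show 2 * (k + 1) - 1 = 2 * k + 1 by omega, show 2 * (k + 1) = 2 * k + 1 + 1 by ring,
        Nat.factorial_eq_mul_doubleFactorial, show 2 * k + 1 + 1 = 2 * (k + 1) by ring,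
        Nat.doubleFactorial_two_mul]
      push_cast
      ring
  rw [Real.Gamma_nat_add_half, hfac,
    show (4 : ℝ) ^ n = 2 ^ n * 2 ^ n by rw [← mul_pow]; norm_num]
  field_simp

noncomputable section PoissonIntegral

/-- Poisson's weight `(1 - t²)^(γ - 1/2)` after the substitution `t = √u`, which turns its
moments into Beta integrals. -/
def besselWeight (γ u : ℝ) : ℝ := u ^ ((1 / 2 : ℝ) - 1) * (1 - u) ^ ((γ + 1 / 2) - 1)

def poissonConst (γ : ℝ) : ℝ :=
  Real.Gamma (γ + 1) / (Real.sqrt Real.pi * Real.Gamma (γ + 1 / 2))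

variable {γ : ℝ}

lemma integrableOn_besselWeight (hγ : -(1 / 2) < γ) :
    IntegrableOn (besselWeight γ) (Ioo 0 1) :=
  integrableOn_rpow_mul_one_sub_rpow one_half_pos (by linarith)

lemma besselWeight_nonneg (γ : ℝ) {u : ℝ} (hu : u ∈ Ioo (0 : ℝ) 1) :
    0 ≤ besselWeight γ u :=
  mul_nonneg (Real.rpow_nonneg hu.1.le _) (Real.rpow_nonneg (sub_nonneg.2 hu.2.le) _)

lemma pow_mul_besselWeight (γ : ℝ) (n : ℕ) {u : ℝ} (hu : 0 < u) :
    u ^ n * besselWeight γ u = u ^ ((n + 1 / 2 : ℝ) - 1) * (1 - u) ^ ((γ + 1 / 2) - 1) := by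
  rw [besselWeight, ← mul_assoc, ← Real.rpow_natCast, ← Real.rpow_add hu]
  ring_nf

lemma integrableOn_pow_mul_besselWeight (hγ : -(1 / 2) < γ) (n : ℕ) :
    IntegrableOn (fun u => u ^ n * besselWeight γ u) (Ioo 0 1) :=
  IntegrableOn.congr_fun (integrableOn_rpow_mul_one_sub_rpow (by positivity) (by linarith))
    (fun u hu => (pow_mul_besselWeight γ n hu.1).symm) measurableSet_Ioo

lemma integral_pow_mul_besselWeight (hγ : -(1 / 2) < γ) (n : ℕ) :
    ∫ u in Ioo 0 1, u ^ n * besselWeight γ u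
      = Real.Gamma (n + 1 / 2) * Real.Gamma (γ + 1 / 2) / Real.Gamma (n + γ + 1) := by
  rw [setIntegral_congr_fun measurableSet_Ioo fun u hu => pow_mul_besselWeight γ n hu.1,
    integral_rpow_mul_one_sub_rpow (by positivity) (by linarith),
    show (n : ℝ) + 1 / 2 + (γ + 1 / 2) = n + γ + 1 by ring]

lemma poissonConst_pos (hγ : -(1 / 2) < γ) : 0 < poissonConst γ :=
  div_pos (Real.Gamma_pos_of_pos (by linarith))
    (mul_pos (Real.sqrt_pos.2 Real.pi_pos) (Real.Gamma_pos_of_pos (by linarith)))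

lemma hasSum_cos_mul_sqrt_mul_besselWeight (γ x : ℝ) {u : ℝ} (hu : 0 ≤ u) :
    HasSum (fun n : ℕ => (-1) ^ n * x ^ (2 * n) / (2 * n)! * (u ^ n * besselWeight γ u))
      (Real.cos (x * Real.sqrt u) * besselWeight γ u) := by
  have hterm (n : ℕ) : (-1) ^ n * (x * Real.sqrt u) ^ (2 * n) / (2 * n)! * besselWeight γ u
      = (-1) ^ n * x ^ (2 * n) / (2 * n)! * (u ^ n * besselWeight γ u) := by
    rw [mul_pow, pow_mul (Real.sqrt u), Real.sq_sqrt hu]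
    ring
  simpa only [hterm] using (Real.hasSum_cos (x * Real.sqrt u)).mul_right (besselWeight γ u)

lemma poissonConst_mul_moment (hγ : -(1 / 2) < γ) (x : ℝ) (n : ℕ) :
    poissonConst γ * ((-1) ^ n * x ^ (2 * n) / (2 * n)! *
        (Real.Gamma (n + 1 / 2) * Real.Gamma (γ + 1 / 2) / Real.Gamma (n + γ + 1)))
      = Real.Gamma (γ + 1) *
          ((-1) ^ n * (x / 2) ^ (2 * n) / (n ! * Real.Gamma (n + γ + 1))) := by
  have hπ : Real.sqrt Real.pi ≠ 0 := (Real.sqrt_pos.2 Real.pi_pos).ne'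
  have hΓ : Real.Gamma (γ + 1 / 2) ≠ 0 := (Real.Gamma_pos_of_pos (by linarith)).ne'
  have hΓn : Real.Gamma (n + γ + 1) ≠ 0 :=
    (Real.Gamma_pos_of_pos (by linarith [n.cast_nonneg (α := ℝ)])).ne'
  rw [poissonConst, Real.Gamma_nat_add_half_eq_factorial, div_pow, pow_mul (2 : ℝ)]
  generalize Real.Gamma (γ + 1 / 2) = G at hΓ ⊢
  field_simp
  norm_num

theorem normBesselJ_eq_poissonConst_mul_integral (hγ : -(1 / 2) < γ) (x : ℝ) :
    normBesselJ γ x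
      = poissonConst γ * ∫ u in Ioo 0 1, Real.cos (x * Real.sqrt u) * besselWeight γ u := by
  set c : ℕ → ℝ := fun n => (-1) ^ n * x ^ (2 * n) / (2 * n)!
  set F : ℕ → ℝ → ℝ := fun n u => c n * (u ^ n * besselWeight γ u)
  have hF_int (n : ℕ) : IntegrableOn (F n) (Ioo 0 1) :=
    (integrableOn_pow_mul_besselWeight hγ n).const_mul (c n)
  have hF_norm (n : ℕ) : ∫ u in Ioo 0 1, ‖F n u‖
      ≤ |x| ^ (2 * n) / (2 * n)! * ∫ u in Ioo 0 1, besselWeight γ u := by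
    rw [← integral_const_mul]
    refine setIntegral_mono_on (hF_int n).norm ((integrableOn_besselWeight hγ).const_mul _)
      measurableSet_Ioo fun u hu => ?_
    have hw := besselWeight_nonneg γ hu
    have hc : |c n| = |x| ^ (2 * n) / (2 * n)! := by simp [c, abs_div, abs_mul, abs_pow]
    rw [Real.norm_eq_abs, abs_mul, hc, abs_of_nonneg (mul_nonneg (pow_nonneg hu.1.le n) hw)]
    gcongr
    exact mul_le_of_le_one_left hw (pow_le_one₀ hu.1.le hu.2.le)
  have hF_sum : HasSum (fun n => ∫ u in Ioo 0 1, F n u)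
      (∫ u in Ioo 0 1, Real.cos (x * Real.sqrt u) * besselWeight γ u) := by
    have hsummable : Summable fun n => ∫ u in Ioo 0 1, ‖F n u‖ :=
      Summable.of_nonneg_of_le (fun n => integral_nonneg fun u => norm_nonneg _) hF_norm
        ((Real.hasSum_cosh |x|).summable.mul_right _)
    rw [setIntegral_congr_fun measurableSet_Ioo fun u hu =>
      (hasSum_cos_mul_sqrt_mul_besselWeight γ x hu.1.le).tsum_eq.symm]
    exact hasSum_integral_of_summable_integral_norm hF_int hsummable
  rw [normBesselJ, ← (hF_sum.mul_left _).tsum_eq, ← tsum_mul_left]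
  exact tsum_congr fun n => by
    rw [integral_const_mul, integral_pow_mul_besselWeight hγ, poissonConst_mul_moment hγ]

lemma normBesselJ_zero (hγ : -1 < γ) : normBesselJ γ 0 = 1 := by
  rw [normBesselJ, tsum_eq_single 0 fun n hn => by simp [hn]]
  simp [(Real.Gamma_pos_of_pos (by linarith : 0 < γ + 1)).ne']

theorem abs_normBesselJ_le_one (hγ : -(1 / 2) < γ) (x : ℝ) : |normBesselJ γ x| ≤ 1 := by
  have hK := poissonConst_pos hγ
  calc |normBesselJ γ x|
      = poissonConst γ * |∫ u in Ioo 0 1, Real.cos (x * Real.sqrt u) * besselWeight γ u| := by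
        rw [normBesselJ_eq_poissonConst_mul_integral hγ, abs_mul, abs_of_pos hK]
    _ ≤ poissonConst γ * ∫ u in Ioo 0 1, besselWeight γ u := by
        gcongr
        rw [← Real.norm_eq_abs]
        refine norm_integral_le_of_norm_le (integrableOn_besselWeight hγ) ?_
        filter_upwards [ae_restrict_mem measurableSet_Ioo] with u hu
        rw [norm_mul, Real.norm_of_nonneg (besselWeight_nonneg γ hu)]
        exact mul_le_of_le_one_left (besselWeight_nonneg γ hu) (Real.abs_cos_le_one _)
    _ = normBesselJ γ 0 := by simp [normBesselJ_eq_poissonConst_mul_integral hγ]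
    _ = 1 := normBesselJ_zero (by linarith)

theorem continuous_normBesselJ (hγ : -(1 / 2) < γ) : Continuous (normBesselJ γ) := by
  rw [funext (normBesselJ_eq_poissonConst_mul_integral hγ)]
  refine continuous_const.mul <| continuous_of_dominated
    (F := fun x u => Real.cos (x * Real.sqrt u) * besselWeight γ u) (fun x => ?_) (fun x => ?_)
    (integrableOn_besselWeight hγ) (ae_of_all _ fun u => ?_)
  · exact (Continuous.aestronglyMeasurable (by fun_prop)).mul
      (integrableOn_besselWeight hγ).aestronglyMeasurable
  · filter_upwards [ae_restrict_mem measurableSet_Ioo] with u hu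
    rw [norm_mul, Real.norm_of_nonneg (besselWeight_nonneg γ hu)]
    exact mul_le_of_le_one_left (besselWeight_nonneg γ hu) (Real.abs_cos_le_one _)
  · fun_prop

end PoissonIntegral

section QuadraticPhaseFourierBessel

variable {a b c d e γ : ℝ}

lemma norm_qpKernel_le_one (hγ : -(1 / 2) < γ) (t s : ℝ) :
    ‖qpKernel a b c d e γ t s‖ ≤ 1 := by
  rw [qpKernel, norm_mul, Complex.norm_exp, Complex.norm_real, Real.norm_eq_abs]
  simpa [← Complex.ofReal_pow] using abs_normBesselJ_le_one hγ (s * t / b)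

lemma continuous_qpKernel (hγ : -(1 / 2) < γ) :
    Continuous fun p : ℝ × ℝ => qpKernel a b c d e γ p.1 p.2 := by
  have := continuous_normBesselJ hγ
  unfold qpKernel
  fun_prop

lemma continuous_integral_qpKernel_mul (hγ : -(1 / 2) < γ) {μ : Measure ℝ} {g : ℝ → ℂ}
    (hg : Integrable g μ) : Continuous fun t => ∫ s, qpKernel a b c d e γ t s * g s ∂μ := by
  have hK : Continuous fun p : ℝ × ℝ => qpKernel a b c d e γ p.1 p.2 :=
    continuous_qpKernel hγ
  refine continuous_of_dominated (fun t => ?_) (fun t => ae_of_all _ fun s => ?_) hg.norm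
    (ae_of_all _ fun s => ?_)
  · exact (hK.comp (continuous_const.prodMk continuous_id)).aestronglyMeasurable.mul hg.1
  · rw [norm_mul]
    exact mul_le_of_le_one_left (norm_nonneg _) (norm_qpKernel_le_one hγ t s)
  · exact (hK.comp (continuous_id.prodMk continuous_const)).mul continuous_const

lemma integrableOn_mul_rpow_of_memLp_muGamma {h : ℝ → ℂ} (hh : MemLp h 1 (muGamma γ)) :
    IntegrableOn (fun s => h s * ((s ^ (2 * γ + 1) : ℝ) : ℂ)) (Ioi 0) := by
  rw [memLp_one_iff_integrable, muGamma,
    integrable_withDensity_iff_integrable_smul' (by fun_prop)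
      (ae_of_all _ fun _ => ofReal_lt_top)] at hh
  refine hh.congr ((ae_restrict_mem measurableSet_Ioi).mono fun s hs => ?_)
  dsimp only
  rw [ENNReal.toReal_ofReal (Real.rpow_nonneg (le_of_lt hs) _), Complex.real_smul, mul_comm]

theorem continuous_qpFB (hγ : -(1 / 2) < γ) {h : ℝ → ℂ} (hh : MemLp h 1 (muGamma γ)) :
    Continuous (qpFB a b c d e γ h) := by
  unfold qpFB
  simp_rw [mul_assoc]
  exact continuous_const.mul
    (continuous_integral_qpKernel_mul hγ (integrableOn_mul_rpow_of_memLp_muGamma hh))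

end QuadraticPhaseFourierBessel

theorem qpFB_continuousOn_general (a b c d e γ : ℝ) (hγ : γ > -(1 / 2))
    (h : ℝ → ℂ) (hh : MemLp h 1 (muGamma γ)) :
    ContinuousOn (qpFB a b c d e γ h) (Ici (0 : ℝ)) :=
  (continuous_qpFB hγ hh).continuousOn

/-- continuity of the quadratic-phase Fourier–Bessel transform
of an `L¹_γ` function on `[0,∞)`. -/
theorem qpFB_continuousOn (a b c d e γ : ℝ) (hb : b ≠ 0) (hγ : γ > -(1 / 2))
    (h : ℝ → ℂ) (hh : MemLp h 1 (muGamma γ)) :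
    ContinuousOn (qpFB a b c d e γ h) (Ici (0 : ℝ)) :=
  qpFB_continuousOn_general a b c d e γ hγ h hh
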